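/- arXiv:1810.09641 — 3 statements merged into one kernel-verified Lean document; each statement's English description precedes it below -/
import Mathlib

section
/- Let n ≡ 1 (mod 3) in 𝒪_F, written as n = a + bω + c√3 + dω√3. Given the supplementary laws (ω/n)₃ = ω^{(a+b−1)/3}, (1−ω/n)₃ = ω^{(1−a)/3}, and (ε/n)₃ = ω^{−c} where ε = (1+√3)/(1−i), one has (√3/n)₃ = ω^{b/3}. -/
/-!
With `ζ³ = i`, `ζ⁴ = ω` and `ζ + ζ¹¹ = √3`, the factorisation `√3 = i³ ω (1 - ω)` gives
`(√3/n)₃ = ω^((a+b-1)/3 + (1-a)/3)`, which is `ω^(b/3)` as soon as `3 ∣ a - 1` and `3 ∣ b`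
(the exponents are floor quotients, so exact divisibility matters). Both divisibilities come
from `n ≡ 1 (mod 3)`: in the integral basis `1, ζ, ζ², ζ³` of `𝓞_F` the coordinates of `n - 1`
are `a - 1 - b, 2c - d, b, 2d - c`, and `3` divides each of them.
-/

open NumberField

theorem Module.Basis.intCast_dvd_repr {ι S : Type*} [Ring S] (B : Module.Basis ι ℤ S) {k : ℤ}
    {x : S} (h : (k : S) ∣ x) (i : ι) : k ∣ B.repr x i := by
  obtain ⟨y, rfl⟩ := h
  rw [← zsmul_eq_mul, map_zsmul, Finsupp.smul_apply, smul_eq_mul]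
  exact dvd_mul_right _ _

namespace IsPrimitiveRoot

section Twelve

variable {R : Type*} [CommRing R] [IsDomain R] {ζ : R}

theorem pow_six_eq_neg_one_of_twelve (hζ : IsPrimitiveRoot ζ 12) : ζ ^ 6 = -1 :=
  (hζ.pow_of_dvd (by norm_num) (by norm_num)).eq_neg_one_of_two_right

theorem pow_four_eq_of_twelve (hζ : IsPrimitiveRoot ζ 12) : ζ ^ 4 = ζ ^ 2 - 1 := by
  have hne : ζ ^ 2 + 1 ≠ 0 := fun h =>
    hζ.pow_ne_one_of_pos_of_lt (l := 4) (by norm_num) (by norm_num)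
      (by linear_combination (ζ ^ 2 - 1) * h)
  have hprod : (ζ ^ 2 + 1) * (ζ ^ 4 - ζ ^ 2 + 1) = 0 := by
    linear_combination hζ.pow_six_eq_neg_one_of_twelve
  linear_combination (mul_eq_zero.mp hprod).resolve_left hne

theorem add_pow_eleven_eq_of_twelve (hζ : IsPrimitiveRoot ζ 12) :
    ζ + ζ ^ 11 = ζ ^ 3 * ζ ^ 3 * ζ ^ 3 * ζ ^ 4 * (1 - ζ ^ 4) := by
  linear_combination (ζ ^ 5 - ζ) * hζ.pow_eq_one + ζ ^ 5 * hζ.pow_six_eq_neg_one_of_twelve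

end Twelve

variable {ζ : 𝓞 (CyclotomicField 12 ℚ)}

theorem exists_basis_pow_of_twelve (hζ : IsPrimitiveRoot ζ 12) :
    ∃ B : Module.Basis (Fin 4) ℤ (𝓞 (CyclotomicField 12 ℚ)), ∀ i, B i = ζ ^ (i : ℕ) := by
  -- the library instance is stated for `CyclotomicField.algebra`, not the canonical `ℚ`-algebra
  have : IsCyclotomicExtension {12} ℚ (CyclotomicField 12 ℚ) :=
    CyclotomicField.isCyclotomicExtension 12 ℚ
  set pb := (hζ.map_of_injective RingOfIntegers.coe_injective).integralPowerBasis
  have hdim : pb.dim = 4 := by rw [integralPowerBasis_dim]; decide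
  refine ⟨pb.basis.reindex (finCongr hdim), fun i => ?_⟩
  rw [Module.Basis.reindex_apply, PowerBasis.coe_basis, integralPowerBasis_gen]
  rfl

theorem dvd_of_intCast_dvd_of_twelve (hζ : IsPrimitiveRoot ζ 12) {k a b c d : ℤ}
    (h : (k : 𝓞 (CyclotomicField 12 ℚ)) ∣ a + b * ζ ^ 4 + c * (ζ + ζ ^ 11)
      + d * (ζ ^ 4 * (ζ + ζ ^ 11))) :
    k ∣ a - b ∧ k ∣ b := by
  obtain ⟨B, hB⟩ := exists_basis_pow_of_twelve hζ
  have hcoords : (a : 𝓞 (CyclotomicField 12 ℚ)) + b * ζ ^ 4 + c * (ζ + ζ ^ 11)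
      + d * (ζ ^ 4 * (ζ + ζ ^ 11)) = ∑ i, ![a - b, 2 * c - d, b, 2 * d - c] i • B i := by
    have hΦ := hζ.pow_four_eq_of_twelve
    have h11 : ζ ^ 11 = ζ - ζ ^ 3 := by
      linear_combination ζ ^ 11 * hΦ + (ζ - ζ ^ 3) * hζ.pow_eq_one
    simp only [Fin.sum_univ_four, hB, zsmul_eq_mul, Matrix.cons_val_zero, Matrix.cons_val_one,
      Matrix.cons_val, Int.cast_sub, Int.cast_mul, Int.cast_ofNat, Fin.coe_ofNat_eq_mod,
      Nat.reduceMod, pow_zero, pow_one, mul_one]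
    linear_combination (b + d * (ζ - ζ ^ 3)) * hΦ + (c + d * ζ ^ 4) * h11
  rw [hcoords] at h
  have := B.intCast_dvd_repr h
  simp only [B.repr_sum_self] at this
  exact ⟨this 0, this 2⟩

end IsPrimitiveRoot

theorem stmt12_general (ζ : 𝓞 (CyclotomicField 12 ℚ)) (hζ : IsPrimitiveRoot ζ 12)
    (a b c d : ℤ) (n : 𝓞 (CyclotomicField 12 ℚ))
    (hn : n = (a : 𝓞 (CyclotomicField 12 ℚ)) + (b : 𝓞 (CyclotomicField 12 ℚ)) * ζ ^ 4
      + (c : 𝓞 (CyclotomicField 12 ℚ)) * (ζ + ζ ^ 11)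
      + (d : 𝓞 (CyclotomicField 12 ℚ)) * (ζ ^ 4 * (ζ + ζ ^ 11)))
    (h3 : (3 : 𝓞 (CyclotomicField 12 ℚ)) ∣ n - 1)
    (w : ℂ) (hw3 : w ^ 3 = 1)
    (χ : 𝓞 (CyclotomicField 12 ℚ) → ℂ)
    (hmul : ∀ x y, χ (x * y) = χ x * χ y)
    (hω : χ (ζ ^ 4) = w ^ ((a + b - 1) / 3))
    (h1ω : χ (1 - ζ ^ 4) = w ^ ((1 - a) / 3))
    (hi : χ (ζ ^ 3) = 1) :
    χ (ζ + ζ ^ 11) = w ^ (b / 3) := by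
  have hdvd : ((3 : ℤ) : 𝓞 (CyclotomicField 12 ℚ)) ∣ ((a - 1 : ℤ) : 𝓞 (CyclotomicField 12 ℚ))
      + b * ζ ^ 4 + c * (ζ + ζ ^ 11) + d * (ζ ^ 4 * (ζ + ζ ^ 11)) := by
    rw [hn] at h3
    push_cast
    convert h3 using 1
    ring
  obtain ⟨ha, hb⟩ := hζ.dvd_of_intCast_dvd_of_twelve hdvd
  have hw0 : w ≠ 0 := by rintro rfl; norm_num at hw3
  rw [hζ.add_pow_eleven_eq_of_twelve]
  simp only [hmul, hi, hω, h1ω, one_mul]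
  rw [← zpow_add₀ hw0]
  congr 1
  omega

/-- Let `n ≡ 1 (mod 3)` in `𝒪_F`, `F = ℚ(ζ₁₂)`, written as
`n = a + bω + c√3 + dω√3`. Given the supplementary laws
`(ω/n)₃ = ω^{(a+b−1)/3}`, `((1−ω)/n)₃ = ω^{(1−a)/3}`, `(ε/n)₃ = ω^{−c}`
(where `ε = (1+√3)/(1−i)`) together with `(i/n)₃ = 1` and multiplicativity
of the symbol `χ = (·/n)₃`, one has `(√3/n)₃ = ω^{b/3}`. Here `w` denotes a
primitive cube root of unity (the common value `ω` of the symbol). -/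
theorem stmt12 (ζ : 𝓞 (CyclotomicField 12 ℚ)) (hζ : IsPrimitiveRoot ζ 12)
    (a b c d : ℤ) (n : 𝓞 (CyclotomicField 12 ℚ))
    (hn : n = (a : 𝓞 (CyclotomicField 12 ℚ)) + (b : 𝓞 (CyclotomicField 12 ℚ)) * ζ ^ 4
      + (c : 𝓞 (CyclotomicField 12 ℚ)) * (ζ + ζ ^ 11)
      + (d : 𝓞 (CyclotomicField 12 ℚ)) * (ζ ^ 4 * (ζ + ζ ^ 11)))
    (h3 : (3 : 𝓞 (CyclotomicField 12 ℚ)) ∣ n - 1)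
    (ε : 𝓞 (CyclotomicField 12 ℚ)) (hε : ε * (1 - ζ ^ 3) = 1 + (ζ + ζ ^ 11))
    (w : ℂ) (hw3 : w ^ 3 = 1) (hw1 : w ≠ 1)
    (χ : 𝓞 (CyclotomicField 12 ℚ) → ℂ)
    (hmul : ∀ x y, χ (x * y) = χ x * χ y)
    (hω : χ (ζ ^ 4) = w ^ ((a + b - 1) / 3))
    (h1ω : χ (1 - ζ ^ 4) = w ^ ((1 - a) / 3))
    (hεval : χ ε = w ^ (-c))
    (hi : χ (ζ ^ 3) = 1) :
    χ (ζ + ζ ^ 11) = w ^ (b / 3) :=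
  stmt12_general ζ hζ a b c d n hn h3 w hw3 χ hmul hω h1ω hi
end

section
/- Let n ∈ 𝒪_F be primary (a fixed generator ≡ 1 mod 3) and coprime to 3, and let σ be the nontrivial automorphism of F over K = ℚ(i). Then the cubic residue symbol (n^σ/n)₃ equals 1. -/
open NumberField

/-!
Since `σ` fixes `i = ζ³` and is not the identity, it sends `ζ ↦ ζ⁵`; hence `σ` is an involution
acting on `ω = ζ⁴` as `ω ↦ ω²`. Reciprocity and the compatibility with `σ` show that
`x = (n^σ/n)₃` is fixed by `σ`. Writing the cube root of unity `x` as `ωᵏ` gives `x = σ x = x²`,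
so `x = 1`.
-/

theorem IsPrimitiveRoot.ringEquiv_eq_refl_of_map_eq {n : ℕ} [NeZero n] {B : Type*} [CommRing B]
    [IsDomain B] [IsCyclotomicExtension {n} ℤ B] {ζ : B} (hζ : IsPrimitiveRoot ζ n)
    (σ : B ≃+* B) (hσ : σ ζ = ζ) : σ = RingEquiv.refl B := by
  have : (σ.toRingHom.toIntAlgHom : B →ₐ[ℤ] B) = AlgHom.id ℤ B :=
    AlgHom.ext_of_adjoin_eq_top (IsCyclotomicExtension.adjoin_primitive_root_eq_top hζ)
      (by simpa using hσ)
  exact RingEquiv.ext fun x => DFunLike.congr_fun this x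

theorem IsPrimitiveRoot.map_eq_self_or_pow_five {R : Type*} [CommRing R] [IsDomain R] {ζ : R}
    (hζ : IsPrimitiveRoot ζ 12) (σ : R ≃+* R) (hσ : σ (ζ ^ 3) = ζ ^ 3) :
    σ ζ = ζ ∨ σ ζ = ζ ^ 5 := by
  obtain ⟨i, hi, hσζ⟩ := hζ.eq_pow_of_pow_eq_one (ξ := σ ζ)
    (by rw [← map_pow, hζ.pow_eq_one, map_one])
  have hcop : i.Coprime 12 :=
    (hζ.pow_iff_coprime (by norm_num) i).1 (hσζ ▸ hζ.map_of_injective σ.injective)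
  have hmod : 3 * i ≡ 3 [MOD 12] := by
    rw [hζ.eq_orderOf, ← (hζ.isOfFinOrder (by norm_num)).pow_eq_pow_iff_modEq, pow_mul', hσζ,
      ← map_pow, hσ]
  have hunits : ∀ i < 12, i.Coprime 12 → 3 * i ≡ 3 [MOD 12] → i = 1 ∨ i = 5 := by decide
  rcases hunits i hi hcop hmod with rfl | rfl <;> simp [← hσζ]

theorem IsPrimitiveRoot.eq_one_of_pow_three_eq_one_of_map_eq_self {R F : Type*} [CommRing R]
    [IsDomain R] [FunLike F R R] [MonoidHomClass F R R]
    {ω x : R} (hω : IsPrimitiveRoot ω 3) (σ : F) (hσω : σ ω = ω ^ 2) (hx : x ^ 3 = 1)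
    (hσx : σ x = x) : x = 1 := by
  obtain ⟨k, -, rfl⟩ := hω.eq_pow_of_pow_eq_one hx
  have hsq : (ω ^ k) ^ 2 = ω ^ k := by
    rw [← pow_mul, mul_comm, pow_mul, ← hσω, ← map_pow, hσx]
  have hne : ω ^ k ≠ 0 := fun h => by simp [h] at hx
  simpa [sq, hne] using hsq

theorem stmt14_general (ζ : 𝓞 (CyclotomicField 12 ℚ)) (hζ : IsPrimitiveRoot ζ 12)
    (σ : 𝓞 (CyclotomicField 12 ℚ) ≃+* 𝓞 (CyclotomicField 12 ℚ))
    (hσi : σ (ζ ^ 3) = ζ ^ 3) (hσne : σ ≠ RingEquiv.refl _)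
    (J : 𝓞 (CyclotomicField 12 ℚ) → 𝓞 (CyclotomicField 12 ℚ) → 𝓞 (CyclotomicField 12 ℚ))
    (hcube : ∀ m k, (J m k) ^ 3 = 1)
    (hconj : ∀ m k, σ (J m k) = J (σ m) (σ k))
    (hrec : ∀ m k, (3 : 𝓞 (CyclotomicField 12 ℚ)) ∣ m - 1 →
      (3 : 𝓞 (CyclotomicField 12 ℚ)) ∣ k - 1 → J m k = J k m)
    (n : 𝓞 (CyclotomicField 12 ℚ)) (hn : (3 : 𝓞 (CyclotomicField 12 ℚ)) ∣ n - 1) :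
    J (σ n) n = 1 := by
  -- not found by instance search, which cannot produce `NeZero ((12 : ℕ) : ℚ)` on its own
  have : IsCyclotomicExtension {12} ℚ (CyclotomicField 12 ℚ) :=
    CyclotomicField.isCyclotomicExtension 12 ℚ
  have hσζ : σ ζ = ζ ^ 5 := (hζ.map_eq_self_or_pow_five σ hσi).resolve_left
    fun h => hσne (hζ.ringEquiv_eq_refl_of_map_eq σ h)
  have hσσ : σ.trans σ = RingEquiv.refl _ := hζ.ringEquiv_eq_refl_of_map_eq _ <| by
    rw [RingEquiv.trans_apply, hσζ, map_pow, hσζ, ← pow_mul,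
      show 5 * 5 = 12 * 2 + 1 by rfl, pow_succ, pow_mul, hζ.pow_eq_one, one_pow, one_mul]
  have hσω : σ (ζ ^ 4) = (ζ ^ 4) ^ 2 := by
    rw [map_pow, hσζ, ← pow_mul, ← pow_mul, show 5 * 4 = 12 + 4 * 2 by rfl, pow_add,
      hζ.pow_eq_one, one_mul]
  have hσn : (3 : 𝓞 (CyclotomicField 12 ℚ)) ∣ σ n - 1 := by
    simpa only [map_sub, map_one, map_ofNat] using map_dvd σ hn
  have hω : IsPrimitiveRoot (ζ ^ 4) 3 := hζ.pow (by norm_num) (by norm_num)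
  refine hω.eq_one_of_pow_three_eq_one_of_map_eq_self σ hσω (hcube _ _) ?_
  rw [hconj, ← RingEquiv.trans_apply σ σ, hσσ, RingEquiv.refl_apply, hrec n (σ n) hn hσn]

/-- Let `n ∈ 𝒪_F`, `F = ℚ(ζ₁₂)`, be primary (`n ≡ 1 mod 3`) and coprime to 3, and
let `σ` be the nontrivial automorphism of `F` over `K = ℚ(i)` (a ring automorphism
of `𝒪_F` fixing `i = ζ₁₂³` and different from the identity). If `J = (·/·)₃` is the
cubic residue symbol — μ₃-valued, compatible with `σ`, and satisfying cubic
reciprocity — then `(n^σ/n)₃ = 1`. -/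
theorem stmt14 (ζ : 𝓞 (CyclotomicField 12 ℚ)) (hζ : IsPrimitiveRoot ζ 12)
    (σ : 𝓞 (CyclotomicField 12 ℚ) ≃+* 𝓞 (CyclotomicField 12 ℚ))
    (hσi : σ (ζ ^ 3) = ζ ^ 3) (hσne : σ ≠ RingEquiv.refl _)
    (J : 𝓞 (CyclotomicField 12 ℚ) → 𝓞 (CyclotomicField 12 ℚ) → 𝓞 (CyclotomicField 12 ℚ))
    (hcube : ∀ m k, (J m k) ^ 3 = 1)
    (hconj : ∀ m k, σ (J m k) = J (σ m) (σ k))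
    (hrec : ∀ m k, (3 : 𝓞 (CyclotomicField 12 ℚ)) ∣ m - 1 →
      (3 : 𝓞 (CyclotomicField 12 ℚ)) ∣ k - 1 → J m k = J k m)
    (n : 𝓞 (CyclotomicField 12 ℚ)) (hn : (3 : 𝓞 (CyclotomicField 12 ℚ)) ∣ n - 1)
    (hn3 : IsCoprime n 3) :
    J (σ n) n = 1 :=
  stmt14_general ζ hζ σ hσi hσne J hcube hconj hrec n hn
end

section
/- Let 𝔭 ∈ 𝒪_F be a prime coprime to 3 and let k, l be nonnegative integers with k ≥ l and l ≡ 0 (mod 3). Then g₃(𝔭^k, 𝔭^l) = φ(𝔭^l) = #(𝒪_F/(𝔭^l))^×. Moreover, if l and k satisfy neither l = k + 1 nor (k ≥ l and 3 | l), then g₃(𝔭^k, 𝔭^l) = 0. -/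
open NumberField

/-- The cubic Gauss sum `g₃(r, n) = Σ_{x mod n} χ(x) e(Tr_F(rx/(δ_F n)))` in
`F = ℚ(ζ₁₂)`, where `χ` is the cubic residue symbol for the modulus `n` and
`δ = δ_F = 2√3 i` is the different of `F`. -/
noncomputable def gaussSum3 (χ : 𝓞 (CyclotomicField 12 ℚ) → ℂ) (δ : CyclotomicField 12 ℚ)
    (r n : 𝓞 (CyclotomicField 12 ℚ)) : ℂ :=
  ∑ᶠ x : 𝓞 (CyclotomicField 12 ℚ) ⧸ Ideal.span {n},
    χ (Quotient.out x) * Complex.exp (2 * (Real.pi : ℂ) * Complex.I *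
      ((Algebra.trace ℚ (CyclotomicField 12 ℚ)
        (((Quotient.out x : 𝓞 (CyclotomicField 12 ℚ)) : CyclotomicField 12 ℚ) * (r : CyclotomicField 12 ℚ)
          / ((n : CyclotomicField 12 ℚ) * δ)) : ℚ) : ℂ))

/-!
For `l ≤ k` the additive character `x ↦ e(Tr(𝔭ᵏ x / (δ 𝔭ˡ)))` is trivial because `δ` generates
the different of `F`, so `g₃` is the character sum `Σ χ(x)ˡ` over `𝒪_F/(𝔭ˡ)`: for `3 ∣ l` it counts
the units, and otherwise it vanishes, since multiplying `x` by a unit `u` with `χ(u)ˡ ≠ 1` rescales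
it. For `l ≥ k + 2` the character is nontrivial on `𝔭^(l-k-1)𝒪_F` (again because `δ𝒪_F` is exactly
the different), while `χˡ` is invariant under translation by this ideal; translating `x` by a
suitable element rescales the sum by a number `≠ 1`. The different is computed from `𝒪_F = ℤ[ζ]`:
it is generated by `Φ₁₂'(ζ) = ζ (4ζ² - 2)`.
-/

open Polynomial
open scoped nonZeroDivisors

section QuotientSum

lemma finsum_eq_zero_of_comp_equiv_eq_mul {α : Type*} [Finite α] {f : α → ℂ} {c : ℂ} (hc : c ≠ 1)
    (e : α ≃ α) (h : ∀ x, f (e x) = c * f x) : ∑ᶠ x, f x = 0 := by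
  have := Fintype.ofFinite α
  have hfix : c * ∑ x, f x = ∑ x, f x := by
    rw [Finset.mul_sum, ← Equiv.sum_comp e f]
    simp only [h]
  rw [finsum_eq_sum_of_fintype]
  by_contra hS
  exact hc ((mul_eq_right₀ hS).1 hfix)

lemma natCard_units_eq_finsum_ite {M : Type*} [Monoid M] [Finite M]
    [DecidablePred (IsUnit : M → Prop)] :
    (Nat.card Mˣ : ℂ) = ∑ᶠ x : M, if IsUnit x then 1 else 0 := by
  have := Fintype.ofFinite M
  have hcard : Nat.card Mˣ = Fintype.card {x : M // IsUnit x} :=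
    (Nat.card_congr (Equiv.ofInjective _ Units.val_injective : Mˣ ≃ {x : M // IsUnit x})).trans
      (Nat.card_eq_fintype_card (α := {x : M // IsUnit x}))
  rw [finsum_eq_sum_of_fintype, Finset.sum_boole, hcard, Fintype.card_subtype]

variable {R : Type*} [CommRing R] {I : Ideal R} {f : R → ℂ}

lemma apply_out_mk_of_add_mem (hf : ∀ y, ∀ w ∈ I, f (y + w) = f y) (y : R) :
    f (Ideal.Quotient.mk I y).out = f y := by
  have hw : (Ideal.Quotient.mk I y).out - y ∈ I := by
    rw [← Ideal.Quotient.eq, Ideal.Quotient.mk_out]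
  simpa using hf y _ hw

variable [Finite (R ⧸ I)]

lemma finsum_out_eq_zero_of_add_left (hf : ∀ y, ∀ w ∈ I, f (y + w) = f y) {a : R} {c : ℂ}
    (hc : c ≠ 1) (ha : ∀ y, f (a + y) = c * f y) : ∑ᶠ x : R ⧸ I, f x.out = 0 := by
  refine finsum_eq_zero_of_comp_equiv_eq_mul hc (Equiv.addLeft (Ideal.Quotient.mk I a)) fun x ↦ ?_
  have hx : Ideal.Quotient.mk I a + x = Ideal.Quotient.mk I (a + x.out) := by
    rw [map_add, Ideal.Quotient.mk_out]
  change f (Ideal.Quotient.mk I a + x).out = c * f x.out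
  rw [hx, apply_out_mk_of_add_mem hf, ha]

lemma finsum_out_eq_zero_of_mul_left (hf : ∀ y, ∀ w ∈ I, f (y + w) = f y) {a : R}
    (hu : IsUnit (Ideal.Quotient.mk I a)) {c : ℂ} (hc : c ≠ 1) (ha : ∀ y, f (a * y) = c * f y) :
    ∑ᶠ x : R ⧸ I, f x.out = 0 := by
  refine finsum_eq_zero_of_comp_equiv_eq_mul hc (Units.mulLeft hu.unit) fun x ↦ ?_
  have hx : Ideal.Quotient.mk I a * x = Ideal.Quotient.mk I (a * x.out) := by
    rw [map_mul, Ideal.Quotient.mk_out]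
  change f (Ideal.Quotient.mk I a * x).out = c * f x.out
  rw [hx, apply_out_mk_of_add_mem hf, ha]

end QuotientSum

lemma pow_ne_one_of_not_three_dvd {M : Type*} [Monoid M] {z : M} (hz : z ^ 3 = 1) (hz1 : z ≠ 1)
    {l : ℕ} (hl : ¬ 3 ∣ l) : z ^ l ≠ 1 :=
  fun h ↦ hl (orderOf_eq_prime hz hz1 ▸ orderOf_dvd_of_pow_eq_one h)

section ResidueCharacter

variable {R : Type*} [CommRing R] [IsDedekindDomain R] {p : R}

lemma isUnit_mk_span_pow_iff (hp : Prime p) {l : ℕ} (hl : l ≠ 0) {y : R} :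
    IsUnit (Ideal.Quotient.mk (Ideal.span {p ^ l}) y) ↔ ¬ p ∣ y := by
  have : (Ideal.span {p}).IsMaximal :=
    ((Ideal.span_singleton_prime hp.ne_zero).2 hp).isMaximal (by simpa using hp.ne_zero)
  rw [← Ideal.span_singleton_pow, Ideal.Quotient.isUnit_mk_pow_iff_notMem _ hl,
    Ideal.mem_span_singleton]

lemma pow_eq_ite_isUnit {χ : R → ℂ} (hp : Prime p) (hcube : ∀ x, ¬ p ∣ x → χ x ^ 3 = 1)
    (hzero : ∀ x, p ∣ x → χ x = 0) {l : ℕ} (hl : 3 ∣ l) (y : R)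
    [Decidable (IsUnit (Ideal.Quotient.mk (Ideal.span {p ^ l}) y))] :
    χ y ^ l = if IsUnit (Ideal.Quotient.mk (Ideal.span {p ^ l}) y) then 1 else 0 := by
  rcases eq_or_ne l 0 with rfl | hl0
  · simp [isUnit_of_subsingleton]
  obtain ⟨t, rfl⟩ := hl
  by_cases hpy : p ∣ y
  · rw [hzero y hpy, zero_pow hl0, if_neg ((isUnit_mk_span_pow_iff hp hl0).not_left.2 hpy)]
  · rw [pow_mul, hcube y hpy, one_pow, if_pos ((isUnit_mk_span_pow_iff hp hl0).2 hpy)]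

end ResidueCharacter

lemma NumberField.RingOfIntegers.finite_quotient_span_singleton {K : Type*} [Field K]
    [NumberField K] {n : 𝓞 K} (hn : n ≠ 0) : Finite (𝓞 K ⧸ Ideal.span {n}) :=
  Ideal.finiteQuotientOfFreeOfNeBot _ (by simpa using hn)

local notation "F" => CyclotomicField 12 ℚ
local notation "O" => 𝓞 (CyclotomicField 12 ℚ)

instance : IsCyclotomicExtension {12} ℚ F := CyclotomicField.isCyclotomicExtension 12 ℚ

namespace Cyclotomic12

variable {ζ : O}

lemma pow_four_sub_sq_add_one (hζ : IsPrimitiveRoot ζ 12) : ζ ^ 4 - ζ ^ 2 + 1 = 0 := by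
  have h6 : ζ ^ 6 = -1 := (hζ.pow (by norm_num) (by norm_num : 12 = 6 * 2)).eq_neg_one_of_two_right
  have h4 : ζ ^ 4 ≠ 1 := hζ.pow_ne_one_of_pos_of_lt (by norm_num) (by norm_num)
  have hfac : (ζ ^ 2 + 1) * (ζ ^ 4 - ζ ^ 2 + 1) = 0 := by linear_combination h6
  refine (mul_eq_zero.1 hfac).resolve_left fun h ↦ h4 ?_
  linear_combination (ζ ^ 2 - 1) * h

lemma minpoly_int_eq (hζ : IsPrimitiveRoot ζ 12) : minpoly ℤ ζ = X ^ 4 - X ^ 2 + 1 := by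
  have hζF : IsPrimitiveRoot (ζ : F) 12 := hζ.map_of_injective RingOfIntegers.coe_injective
  have hcyc : minpoly ℤ ζ = cyclotomic 12 ℤ := by
    rw [cyclotomic_eq_minpoly hζF (by norm_num),
      ← minpoly.algebraMap_eq RingOfIntegers.coe_injective]
    rfl
  have hmonic : (X ^ 4 - X ^ 2 + 1 : ℤ[X]).Monic := by monicity!
  refine (eq_of_monic_of_dvd_of_natDegree_le (minpoly.monic (RingOfIntegers.isIntegral ζ)) hmonic
    (minpoly.isIntegrallyClosed_dvd (RingOfIntegers.isIntegral ζ) ?_) ?_).symm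
  · simpa using pow_four_sub_sq_add_one hζ
  · rw [hcyc, natDegree_cyclotomic]
    compute_degree!

/-- The paper's `δ_F = 2√3 i`. -/
noncomputable def delta (ζ : O) : O := 4 * ζ ^ 2 - 2

lemma coe_delta (hζ : IsPrimitiveRoot ζ 12) :
    ((delta ζ : O) : F) = 2 * ((ζ : F) + (ζ : F) ^ 11) * (ζ : F) ^ 3 := by
  have hδ : delta ζ = 2 * (ζ + ζ ^ 11) * ζ ^ 3 := by
    rw [delta]
    linear_combination (-2 : O) * pow_four_sub_sq_add_one hζ - 2 * ζ ^ 2 * hζ.pow_eq_one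
  rw [hδ]
  push_cast [map_ofNat]
  ring

lemma differentIdeal_eq_span_delta (hζ : IsPrimitiveRoot ζ 12) :
    differentIdeal ℤ O = Ideal.span {delta ζ} := by
  have hζF : IsPrimitiveRoot (ζ : F) 12 := hζ.map_of_injective RingOfIntegers.coe_injective
  have hconductor : conductor ℤ ζ = ⊤ :=
    conductor_eq_top_of_adjoin_eq_top (IsCyclotomicExtension.Rat.adjoin_singleton_eq_top hζF)
  have hderiv : aeval ζ (derivative (minpoly ℤ ζ)) = ζ * delta ζ := by
    rw [minpoly_int_eq hζ, delta]
    simp [map_ofNat]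
    ring
  have := conductor_mul_differentIdeal ℤ ℚ F ζ
    (IsCyclotomicExtension.adjoin_primitive_root_eq_top hζF)
  rwa [hconductor, Ideal.top_mul, hderiv,
    Ideal.span_singleton_mul_left_unit (hζ.isUnit (by norm_num))] at this

lemma delta_ne_zero (hζ : IsPrimitiveRoot ζ 12) : delta ζ ≠ 0 := by
  intro h
  have := differentIdeal_ne_bot (A := ℤ) (B := O)
  rw [differentIdeal_eq_span_delta hζ, h] at this
  exact this (Ideal.span_singleton_eq_bot.2 rfl)

/-- That is, the codifferent of `F` is `δ⁻¹ 𝓞 F`. -/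
lemma forall_exists_int_trace_mul_iff (hζ : IsPrimitiveRoot ζ 12) (c : F) :
    (∀ z : O, ∃ m : ℤ, Algebra.trace ℚ F (c * z) = m) ↔ ∃ u : O, c * delta ζ = u := by
  have hdual : FractionalIdeal.dual ℤ ℚ (1 : FractionalIdeal O⁰ F) =
      FractionalIdeal.spanSingleton O⁰ ((delta ζ : F))⁻¹ := by
    rw [← inv_inv (FractionalIdeal.dual ℤ ℚ _), ← coeIdeal_differentIdeal ℤ ℚ F O,
      differentIdeal_eq_span_delta hζ, FractionalIdeal.coeIdeal_span_singleton,
      FractionalIdeal.spanSingleton_inv]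
  have hδ : (delta ζ : F) ≠ 0 := by exact_mod_cast delta_ne_zero hζ
  have hmem := FractionalIdeal.mem_dual (A := ℤ) (K := ℚ)
    (one_ne_zero (α := FractionalIdeal O⁰ F)) (x := c)
  rw [hdual, FractionalIdeal.mem_spanSingleton] at hmem
  simp only [FractionalIdeal.mem_one_iff, forall_exists_index, forall_apply_eq_imp_iff,
    Algebra.traceForm_apply, RingHom.mem_range, eq_comm (b := Algebra.trace ℚ F _),
    algebraMap_int_eq, eq_intCast, Algebra.smul_def] at hmem
  rw [← hmem]
  refine exists_congr fun u ↦ ?_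
  rw [eq_comm, eq_mul_inv_iff_mul_eq₀ hδ]

lemma exists_int_trace_div_delta (hζ : IsPrimitiveRoot ζ 12) (w : O) :
    ∃ m : ℤ, Algebra.trace ℚ F (w / delta ζ) = m := by
  have hδ : (delta ζ : F) ≠ 0 := by exact_mod_cast delta_ne_zero hζ
  rw [div_eq_inv_mul]
  exact (forall_exists_int_trace_mul_iff hζ _).2 ⟨1, by simp [inv_mul_cancel₀ hδ]⟩ w

lemma exists_trace_div_ne_int (hζ : IsPrimitiveRoot ζ 12) {p : O} (hp : Prime p) :
    ∃ z : O, ∀ m : ℤ, Algebra.trace ℚ F (z / (p * delta ζ)) ≠ m := by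
  have hδ : (delta ζ : F) ≠ 0 := by exact_mod_cast delta_ne_zero hζ
  have hp0 : (p : F) ≠ 0 := by exact_mod_cast hp.ne_zero
  by_contra! h
  obtain ⟨u, hu⟩ := (forall_exists_int_trace_mul_iff hζ (p * delta ζ)⁻¹).1 fun z ↦ by
    simpa only [div_eq_inv_mul] using h z
  refine hp.not_isUnit (IsUnit.of_mul_eq_one u (RingOfIntegers.coe_injective ?_))
  field_simp at hu
  push_cast
  rw [← hu]

noncomputable def traceExp (δ : F) (r n y : O) : ℂ :=
  Complex.exp (2 * (Real.pi : ℂ) * Complex.I *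
    ((Algebra.trace ℚ F ((y : F) * r / (n * δ)) : ℚ) : ℂ))

lemma gaussSum3_eq_finsum (χ : O → ℂ) (δ : F) (r n : O) :
    gaussSum3 χ δ r n = ∑ᶠ x : O ⧸ Ideal.span {n}, χ x.out * traceExp δ r n x.out :=
  rfl

lemma traceExp_add (δ : F) (r n y y' : O) :
    traceExp δ r n (y + y') = traceExp δ r n y * traceExp δ r n y' := by
  simp only [traceExp, map_add, add_mul, add_div, Rat.cast_add, mul_add, Complex.exp_add]

lemma traceExp_eq_one_iff (δ : F) (r n y : O) :
    traceExp δ r n y = 1 ↔ ∃ m : ℤ, Algebra.trace ℚ F ((y : F) * r / (n * δ)) = m := by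
  rw [traceExp, Complex.exp_eq_one_iff]
  refine exists_congr fun m ↦ ?_
  rw [mul_comm (m : ℂ), mul_right_inj' (by simp [Real.pi_ne_zero, Complex.I_ne_zero])]
  exact_mod_cast Iff.rfl

lemma traceExp_eq_one_of_dvd (hζ : IsPrimitiveRoot ζ 12) {r n y : O} (hn : n ≠ 0)
    (h : n ∣ y * r) : traceExp (delta ζ) r n y = 1 := by
  obtain ⟨w, hw⟩ := h
  obtain ⟨m, hm⟩ := exists_int_trace_div_delta hζ w
  refine (traceExp_eq_one_iff _ _ _ _).2 ⟨m, ?_⟩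
  have hn' : (n : F) ≠ 0 := by exact_mod_cast hn
  have hyr : (y : F) * r = n * w := by exact_mod_cast hw
  rw [← hm, hyr, mul_div_mul_left _ _ hn']

lemma traceExp_add_mem (hζ : IsPrimitiveRoot ζ 12) {r n : O} (hn : n ≠ 0) (y : O) {w : O}
    (hw : w ∈ Ideal.span {n}) : traceExp (delta ζ) r n (y + w) = traceExp (delta ζ) r n y := by
  rw [traceExp_add, mul_right_eq_self₀]
  exact .inl (traceExp_eq_one_of_dvd hζ hn (dvd_mul_of_dvd_left (Ideal.mem_span_singleton.1 hw) r))

lemma exists_dvd_traceExp_ne_one (hζ : IsPrimitiveRoot ζ 12) {p : O} (hp : Prime p) {k l : ℕ}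
    (hkl : k + 1 < l) : ∃ a, p ∣ a ∧ traceExp (delta ζ) (p ^ k) (p ^ l) a ≠ 1 := by
  obtain ⟨z, hz⟩ := exists_trace_div_ne_int hζ hp
  obtain ⟨j, rfl⟩ : ∃ j, l = k + 1 + (j + 1) := ⟨l - k - 2, by omega⟩
  refine ⟨p ^ (j + 1) * z, dvd_mul_of_dvd_left (dvd_pow_self p j.succ_ne_zero) z, fun h ↦ ?_⟩
  obtain ⟨m, hm⟩ := (traceExp_eq_one_iff _ _ _ _).1 h
  refine hz m (Eq.trans ?_ hm)
  have hp' : (p : F) ≠ 0 := by exact_mod_cast hp.ne_zero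
  congr 1
  push_cast
  field_simp
  ring

variable {𝔭 : O} {χ : O → ℂ} {k l : ℕ}

lemma pow_mul_traceExp_add_mem (hζ : IsPrimitiveRoot ζ 12) (hp : Prime 𝔭)
    (hper : ∀ x y, 𝔭 ∣ x - y → χ x = χ y) (hl : l ≠ 0) (y : O) {w : O}
    (hw : w ∈ Ideal.span {𝔭 ^ l}) :
    χ (y + w) ^ l * traceExp (delta ζ) (𝔭 ^ k) (𝔭 ^ l) (y + w) =
      χ y ^ l * traceExp (delta ζ) (𝔭 ^ k) (𝔭 ^ l) y := by
  rw [traceExp_add_mem hζ (pow_ne_zero l hp.ne_zero) y hw, hper (y + w) y ?_]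
  simpa using (dvd_pow_self 𝔭 hl).trans (Ideal.mem_span_singleton.1 hw)

lemma traceExp_eq_one_of_le (hζ : IsPrimitiveRoot ζ 12) (hp : Prime 𝔭) (hlk : l ≤ k) (y : O) :
    traceExp (delta ζ) (𝔭 ^ k) (𝔭 ^ l) y = 1 :=
  traceExp_eq_one_of_dvd hζ (pow_ne_zero l hp.ne_zero) (dvd_mul_of_dvd_right (pow_dvd_pow 𝔭 hlk) y)

lemma gaussSum3_eq_natCard_units (hζ : IsPrimitiveRoot ζ 12) (hp : Prime 𝔭)
    (hcube : ∀ x, ¬ 𝔭 ∣ x → χ x ^ 3 = 1) (hzero : ∀ x, 𝔭 ∣ x → χ x = 0)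
    (hlk : l ≤ k) (hl : 3 ∣ l) :
    gaussSum3 (fun x ↦ χ x ^ l) (delta ζ) (𝔭 ^ k) (𝔭 ^ l) =
      (Nat.card (O ⧸ Ideal.span {𝔭 ^ l})ˣ : ℂ) := by
  classical
  have := RingOfIntegers.finite_quotient_span_singleton (pow_ne_zero l hp.ne_zero)
  rw [gaussSum3_eq_finsum, natCard_units_eq_finsum_ite]
  refine finsum_congr fun x ↦ ?_
  rw [traceExp_eq_one_of_le hζ hp hlk, mul_one, pow_eq_ite_isUnit hp hcube hzero hl,
    Ideal.Quotient.mk_out]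

lemma gaussSum3_eq_zero_of_le (hζ : IsPrimitiveRoot ζ 12) (hp : Prime 𝔭)
    (hmul : ∀ x y, χ (x * y) = χ x * χ y) (hper : ∀ x y, 𝔭 ∣ x - y → χ x = χ y)
    (hcube : ∀ x, ¬ 𝔭 ∣ x → χ x ^ 3 = 1) (hord : ∃ x, ¬ 𝔭 ∣ x ∧ χ x ≠ 1)
    (hlk : l ≤ k) (hl : ¬ 3 ∣ l) :
    gaussSum3 (fun x ↦ χ x ^ l) (delta ζ) (𝔭 ^ k) (𝔭 ^ l) = 0 := by
  have hl0 : l ≠ 0 := by omega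
  have := RingOfIntegers.finite_quotient_span_singleton (pow_ne_zero l hp.ne_zero)
  obtain ⟨u, hu, hu1⟩ := hord
  refine finsum_out_eq_zero_of_mul_left
    (f := fun y ↦ χ y ^ l * traceExp (delta ζ) (𝔭 ^ k) (𝔭 ^ l) y)
    (fun y _ hw ↦ pow_mul_traceExp_add_mem hζ hp hper hl0 y hw)
    ((isUnit_mk_span_pow_iff hp hl0).2 hu) (pow_ne_one_of_not_three_dvd (hcube u hu) hu1 hl)
    fun y ↦ ?_
  simp only [hmul, mul_pow, traceExp_eq_one_of_le hζ hp hlk, mul_one]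

lemma gaussSum3_eq_zero_of_add_one_lt (hζ : IsPrimitiveRoot ζ 12) (hp : Prime 𝔭)
    (hper : ∀ x y, 𝔭 ∣ x - y → χ x = χ y) (hkl : k + 1 < l) :
    gaussSum3 (fun x ↦ χ x ^ l) (delta ζ) (𝔭 ^ k) (𝔭 ^ l) = 0 := by
  have := RingOfIntegers.finite_quotient_span_singleton (pow_ne_zero l hp.ne_zero)
  obtain ⟨a, hpa, ha⟩ := exists_dvd_traceExp_ne_one hζ hp hkl
  refine finsum_out_eq_zero_of_add_left (a := a)
    (f := fun y ↦ χ y ^ l * traceExp (delta ζ) (𝔭 ^ k) (𝔭 ^ l) y)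
    (fun y _ hw ↦ pow_mul_traceExp_add_mem hζ hp hper (by omega) y hw) ha fun y ↦ ?_
  simp only [hper (a + y) y (by simpa using hpa), traceExp_add]
  ring

end Cyclotomic12

open Cyclotomic12

theorem stmt18_general (ζ : 𝓞 (CyclotomicField 12 ℚ)) (hζ : IsPrimitiveRoot ζ 12)
    (𝔭 : 𝓞 (CyclotomicField 12 ℚ)) (hp : Prime 𝔭)
    (χ : 𝓞 (CyclotomicField 12 ℚ) → ℂ)
    (hmul : ∀ x y, χ (x * y) = χ x * χ y)
    (hper : ∀ x y, 𝔭 ∣ x - y → χ x = χ y)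
    (hcube : ∀ x, ¬ 𝔭 ∣ x → (χ x) ^ 3 = 1)
    (hzero : ∀ x, 𝔭 ∣ x → χ x = 0)
    (hord : ∃ x, ¬ 𝔭 ∣ x ∧ χ x ≠ 1)
    (k l : ℕ) :
    ((l ≤ k ∧ l % 3 = 0) →
      gaussSum3 (fun x => (χ x) ^ l)
          (2 * ((ζ : CyclotomicField 12 ℚ) + (ζ : CyclotomicField 12 ℚ) ^ 11)
            * (ζ : CyclotomicField 12 ℚ) ^ 3) (𝔭 ^ k) (𝔭 ^ l)
        = (Nat.card (𝓞 (CyclotomicField 12 ℚ) ⧸ Ideal.span {𝔭 ^ l})ˣ : ℂ)) ∧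
    (¬ l = k + 1 → ¬ (l ≤ k ∧ l % 3 = 0) →
      gaussSum3 (fun x => (χ x) ^ l)
          (2 * ((ζ : CyclotomicField 12 ℚ) + (ζ : CyclotomicField 12 ℚ) ^ 11)
            * (ζ : CyclotomicField 12 ℚ) ^ 3) (𝔭 ^ k) (𝔭 ^ l) = 0) := by
  rw [← coe_delta hζ]
  refine ⟨fun ⟨hlk, hl⟩ ↦ gaussSum3_eq_natCard_units hζ hp hcube hzero hlk (by omega),
    fun hne hnot ↦ ?_⟩
  rcases le_or_gt l k with hlk | hkl
  · exact gaussSum3_eq_zero_of_le hζ hp hmul hper hcube hord hlk (by omega)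
  · exact gaussSum3_eq_zero_of_add_one_lt hζ hp hper (by omega)

/-- For a prime `𝔭` of `𝒪_F` coprime to 3 and `k ≥ l ≥ 0` with `3 ∣ l`, one has
`g₃(𝔭^k, 𝔭^l) = φ(𝔭^l) = #(𝒪_F/(𝔭^l))ˣ`; and if neither `l = k + 1` nor
(`k ≥ l` and `3 ∣ l`) holds, then `g₃(𝔭^k, 𝔭^l) = 0`. Here `χ` is the cubic
residue symbol modulo `𝔭` of exact order 3, and the symbol modulo `𝔭^l` is `χ^l`. -/
theorem stmt18 (ζ : 𝓞 (CyclotomicField 12 ℚ)) (hζ : IsPrimitiveRoot ζ 12)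
    (𝔭 : 𝓞 (CyclotomicField 12 ℚ)) (hp : Prime 𝔭) (h3 : IsCoprime 𝔭 3)
    (χ : 𝓞 (CyclotomicField 12 ℚ) → ℂ)
    (hmul : ∀ x y, χ (x * y) = χ x * χ y)
    (hper : ∀ x y, 𝔭 ∣ x - y → χ x = χ y)
    (hcube : ∀ x, ¬ 𝔭 ∣ x → (χ x) ^ 3 = 1)
    (hzero : ∀ x, 𝔭 ∣ x → χ x = 0)
    (hord : ∃ x, ¬ 𝔭 ∣ x ∧ χ x ≠ 1)
    (k l : ℕ) :
    ((l ≤ k ∧ l % 3 = 0) →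
      gaussSum3 (fun x => (χ x) ^ l)
          (2 * ((ζ : CyclotomicField 12 ℚ) + (ζ : CyclotomicField 12 ℚ) ^ 11)
            * (ζ : CyclotomicField 12 ℚ) ^ 3) (𝔭 ^ k) (𝔭 ^ l)
        = (Nat.card (𝓞 (CyclotomicField 12 ℚ) ⧸ Ideal.span {𝔭 ^ l})ˣ : ℂ)) ∧
    (¬ l = k + 1 → ¬ (l ≤ k ∧ l % 3 = 0) →
      gaussSum3 (fun x => (χ x) ^ l)
          (2 * ((ζ : CyclotomicField 12 ℚ) + (ζ : CyclotomicField 12 ℚ) ^ 11)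
            * (ζ : CyclotomicField 12 ℚ) ^ 3) (𝔭 ^ k) (𝔭 ^ l) = 0) :=
  stmt18_general ζ hζ 𝔭 hp χ hmul hper hcube hzero hord k l
end
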